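/- arXiv:1806.00882 — 4 statements merged into one kernel-verified Lean document; each statement's English description precedes it below -/
import Mathlib

section
/- Let G be an MVR chain graph on a finite vertex set V and let Ḡ be an undirected independence graph for G. Then any junction tree constructed from Ḡ (i.e., a junction tree of the cliques of a triangulation of Ḡ) is an m-separation tree for G. -/
namespace MVR

universe u v

/-- A mixed graph with directed (`dir u v` means `u → v`) and bidirected
(`bi u v` means `u ↔ v`) edges between distinct vertices. -/
structure MixedGraph (V : Type u) where
  dir : V → V → Prop
  bi : V → V → Prop
  bi_symm : ∀ ⦃u v : V⦄, bi u v → bi v u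
  dir_irrefl : ∀ v : V, ¬ dir v v
  bi_irrefl : ∀ v : V, ¬ bi v v

namespace MixedGraph

variable {V : Type u}

/-- Two vertices are adjacent if they are joined by a directed or bidirected edge. -/
def Adjacent (G : MixedGraph V) (u v : V) : Prop :=
  G.dir u v ∨ G.dir v u ∨ G.bi u v

/-- `u` is an ancestor of `v`: there is a directed path `u → ⋯ → v`. -/
def IsAncestor (G : MixedGraph V) (u v : V) : Prop :=
  Relation.TransGen G.dir u v

/-- `an(X)`: the set of ancestors of vertices in `X`. -/
def anc (G : MixedGraph V) (X : Set V) : Set V :=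
  {a | ∃ x ∈ X, G.IsAncestor a x}

/-- `An(X) = an(X) ∪ X`. -/
def Anc (G : MixedGraph V) (X : Set V) : Set V :=
  G.anc X ∪ X

/-- The boundary `bd(u)`: vertices `v` with `v → u` or `v ↔ u`. -/
def bd (G : MixedGraph V) (u : V) : Set V :=
  {v | G.dir v u ∨ G.bi v u}

/-- A partially directed cycle: distinct vertices `f 0, …, f (n-1)` (`n ≥ 3`), read
cyclically, every consecutive pair joined by a directed or bidirected edge, with at
least one directed edge. -/
def IsPartiallyDirectedCycle (G : MixedGraph V) (n : ℕ) (f : ℕ → V) : Prop :=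
  3 ≤ n ∧ (∀ i < n, ∀ j < n, f i = f j → i = j) ∧
  (∀ i < n, G.dir (f i) (f ((i + 1) % n)) ∨ G.bi (f i) (f ((i + 1) % n))) ∧
  (∃ i < n, G.dir (f i) (f ((i + 1) % n)))

/-- An MVR chain graph is a mixed graph with no partially directed cycles. -/
def IsMVRChainGraph (G : MixedGraph V) : Prop :=
  ∀ (n : ℕ) (f : ℕ → V), ¬ G.IsPartiallyDirectedCycle n f

/-- A chain (mixed walk) in a mixed graph: each step uses `a → b`, `a ← b` or `a ↔ b`. -/
inductive Chain (G : MixedGraph V) : V → V → Type u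
  | nil (a : V) : Chain G a a
  | fwd {a b c : V} (h : G.dir a b) (p : Chain G b c) : Chain G a c
  | rev {a b c : V} (h : G.dir b a) (p : Chain G b c) : Chain G a c
  | bid {a b c : V} (h : G.bi a b) (p : Chain G b c) : Chain G a c

variable {G : MixedGraph V}

/-- The list of vertices of a chain. -/
def Chain.support {a b : V} (p : G.Chain a b) : List V :=
  match p with
  | .nil _ => [a]
  | .fwd _ q => a :: q.support
  | .rev _ q => a :: q.support
  | .bid _ q => a :: q.support

/-- For each edge of the chain its pair of arrowhead marks
`(arrowhead at left endpoint, arrowhead at right endpoint)`. -/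
def Chain.marks {a b : V} (p : G.Chain a b) : List (Bool × Bool) :=
  match p with
  | .nil _ => []
  | .fwd _ q => (false, true) :: q.marks
  | .rev _ q => (true, false) :: q.marks
  | .bid _ q => (true, true) :: q.marks

/-- The internal vertex lying between edges `i` and `i+1` of the chain (i.e. the vertex
at position `i+1` of the support) is a collider: both incident edges have an arrowhead
at it. -/
def Chain.ColliderAt {a b : V} (p : G.Chain a b) (i : ℕ) : Prop :=
  ∃ m₁ m₂ : Bool × Bool, p.marks[i]? = some m₁ ∧ p.marks[i + 1]? = some m₂ ∧
    m₁.2 = true ∧ m₂.1 = true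

/-- A chain is m-connecting given `Z` if every internal noncollider is not in `Z` and
every internal collider is in `An(Z)`. -/
def Chain.MConnecting {a b : V} (p : G.Chain a b) (Z : Set V) : Prop :=
  ∀ (i : ℕ) (w : V), p.support[i + 1]? = some w → i + 2 < p.support.length →
    (p.ColliderAt i → w ∈ G.Anc Z) ∧ (¬ p.ColliderAt i → w ∉ Z)

/-- A chain is blocked by `Z` if it is not m-connecting given `Z`. -/
def Chain.Blocked {a b : V} (p : G.Chain a b) (Z : Set V) : Prop :=
  ¬ p.MConnecting Z

/-- Vertices `u` and `v` are m-separated by `Z`: every chain (sequence of distinct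
vertices) between them is blocked by `Z`. -/
def MSeparated (G : MixedGraph V) (u v : V) (Z : Set V) : Prop :=
  ∀ p : G.Chain u v, p.support.Nodup → p.Blocked Z

/-- Sets `X` and `Y` are m-separated by `Z`. -/
def MSeparatedSets (G : MixedGraph V) (X Y Z : Set V) : Prop :=
  ∀ u ∈ X, ∀ v ∈ Y, G.MSeparated u v Z

/-- The undirected graph on `V` whose edges are the bidirected edges of `G`. -/
def biGraph (G : MixedGraph V) : SimpleGraph V where
  Adj a b := G.bi a b
  symm := ⟨fun _ _ h => G.bi_symm h⟩
  loopless := ⟨fun a h => G.bi_irrefl a h⟩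

/-- `τ` is a chain component of `G`: a connected component of the bidirected part. -/
def IsChainComponent (G : MixedGraph V) (τ : Set V) : Prop :=
  ∃ a : V, τ = {w | G.biGraph.Reachable a w}

/-- The parent set `pa_G(τ)` of a set of vertices `τ`. -/
def paSet (G : MixedGraph V) (τ : Set V) : Set V :=
  {a | a ∉ τ ∧ ∃ w ∈ τ, G.dir a w}

/-- `u` and `v` are collider connected: there is a chain (with distinct vertices)
from `u` to `v` on which every nonendpoint vertex is a collider. -/
def ColliderConnected (G : MixedGraph V) (u v : V) : Prop :=
  ∃ p : G.Chain u v, p.support.Nodup ∧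
    ∀ i : ℕ, i + 2 < p.support.length → p.ColliderAt i

/-- `T` with node-sets `C` is an m-separation tree for `G`: `T` is a tree, the nodes
cover `V`, and for every edge `(i, j)` of `T`, with separator `S = C i ∩ C j` and
`V₁`, `V₂` the unions of the node sets of the two subtrees obtained by deleting the
edge, the sets `V₁ \ S` and `V₂ \ S` are m-separated by `S` in `G`. -/
def IsMSepTree (G : MixedGraph V) {ι : Type v} (T : SimpleGraph ι) (C : ι → Set V) :
    Prop :=
  T.IsTree ∧ (⋃ i, C i) = Set.univ ∧
  ∀ i j : ι, T.Adj i j →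
    G.MSeparatedSets
      ((⋃ k ∈ {k : ι | (T.deleteEdges {s(i, j)}).Reachable i k}, C k) \ (C i ∩ C j))
      ((⋃ k ∈ {k : ι | (T.deleteEdges {s(i, j)}).Reachable j k}, C k) \ (C i ∩ C j))
      (C i ∩ C j)

end MixedGraph

/-- An undirected graph is triangulated (chordal) if every cycle of length at least 4
has a chord. -/
def IsChordal {W : Type u} (H : SimpleGraph W) : Prop :=
  ∀ (a : W) (c : H.Walk a a), c.IsCycle → 4 ≤ c.length →
    ∃ x y : W, x ∈ c.support ∧ y ∈ c.support ∧ H.Adj x y ∧ s(x, y) ∉ c.edges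

/-- `s` is a maximal clique of `H`. -/
def IsMaxClique {W : Type u} (H : SimpleGraph W) (s : Set W) : Prop :=
  H.IsClique s ∧ ∀ t : Set W, H.IsClique t → s ⊆ t → t = s

/-- `(T, C)` is a junction tree constructed from the undirected graph `H`:
`T` is a tree whose nodes `C i` are exactly the (maximal) cliques of some triangulated
supergraph `Ht` of `H`, satisfying the junction property. -/
def IsJunctionTreeFor {W : Type u} {ι : Type v} (T : SimpleGraph ι) (C : ι → Set W)
    (H : SimpleGraph W) : Prop :=
  T.IsTree ∧
  ∃ Ht : SimpleGraph W, H ≤ Ht ∧ IsChordal Ht ∧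
    Function.Injective C ∧
    (∀ i : ι, IsMaxClique Ht (C i)) ∧
    (∀ s : Set W, IsMaxClique Ht s → ∃ i : ι, C i = s) ∧
    (∀ (i j : ι) (p : T.Walk i j), p.IsPath → ∀ k ∈ p.support, C i ∩ C j ⊆ C k)

/-- In an undirected graph `H`, `Z` separates `X` and `Y`: every path between a vertex
of `X` and a vertex of `Y` passes through `Z`. -/
def USeparates {W : Type u} (H : SimpleGraph W) (X Y Z : Set W) : Prop :=
  ∀ u ∈ X, ∀ v ∈ Y, ∀ p : H.Walk u v, p.IsPath → ∃ z ∈ Z, z ∈ p.support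

/-- `H` is an undirected independence graph (UIG) for the mixed graph `G`: whenever a
set `Z` separates (nonempty, pairwise disjoint) `X` and `Y` in `H`, `Z` m-separates
`X` and `Y` in `G`. -/
def IsUIG {W : Type u} (H : SimpleGraph W) (G : MixedGraph W) : Prop :=
  ∀ X Y Z : Set W, X.Nonempty → Y.Nonempty → Disjoint X Y → Disjoint X Z →
    Disjoint Y Z → USeparates H X Y Z → G.MSeparatedSets X Y Z

end MVR

/-!
Deleting an edge `{i, j}` of the junction tree splits it into two subtrees, with vertex
unions `V₁` and `V₂`. By the junction property `V₁ ∩ V₂ ⊆ S = C i ∩ C j`, and every edge of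
the triangulation lies in a maximal clique, hence in a single node, hence inside `V₁` or
inside `V₂`. So `S` separates `V₁ \ S` from `V₂ \ S` in the triangulation, a fortiori in
the undirected independence graph, and the UIG property turns this into m-separation.
-/

namespace SimpleGraph

variable {ι : Type*} {T : SimpleGraph ι} {i j : ι}

theorem Walk.reachable_deleteEdges_or : ∀ {k : ι}, T.Walk k i →
    (T.deleteEdges {s(i, j)}).Reachable i k ∨ (T.deleteEdges {s(i, j)}).Reachable j k
  | _, .nil => .inl .rfl
  | k, .cons (v := k') hadj w => by
    by_cases he : s(k, k') = s(i, j)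
    · rcases Sym2.eq_iff.mp he with ⟨rfl, -⟩ | ⟨rfl, -⟩
      · exact .inl .rfl
      · exact .inr .rfl
    · have hk : (T.deleteEdges {s(i, j)}).Adj k' k :=
        (deleteEdges_adj ..).mpr ⟨hadj.symm, by rwa [Set.mem_singleton_iff, Sym2.eq_swap]⟩
      exact (reachable_deleteEdges_or w).imp (·.trans hk.reachable) (·.trans hk.reachable)

theorem Connected.reachable_deleteEdges_or (hT : T.Connected) (i j k : ι) :
    (T.deleteEdges {s(i, j)}).Reachable i k ∨ (T.deleteEdges {s(i, j)}).Reachable j k :=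
  (hT.preconnected k i).elim Walk.reachable_deleteEdges_or

theorem IsAcyclic.mem_support_of_reachable_deleteEdges (hT : T.IsAcyclic) (hij : T.Adj i j)
    {k l : ι} (hk : (T.deleteEdges {s(i, j)}).Reachable i k)
    (hl : (T.deleteEdges {s(i, j)}).Reachable j l) (p : T.Walk k l) :
    i ∈ p.support ∧ j ∈ p.support := by
  have hbridge : T.IsBridge s(i, j) := isAcyclic_iff_forall_adj_isBridge.mp hT hij
  have hp : s(i, j) ∈ p.edges :=
    p.mem_edges_of_not_reachable_deleteEdges fun hkl => hbridge (hk.trans (hkl.trans hl.symm))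
  exact ⟨p.fst_mem_support_of_mem_edges hp, p.snd_mem_support_of_mem_edges hp⟩

theorem Walk.exists_mem_support_of_adj_within {V : Type*} {G : SimpleGraph V} {A B S : Set V}
    (hG : ∀ ⦃a b : V⦄, G.Adj a b → (a ∈ A ∧ b ∈ A) ∨ (a ∈ B ∧ b ∈ B)) (hAB : A ∩ B ⊆ S) :
    ∀ {u v : V} (p : G.Walk u v), u ∈ A → v ∈ B → ∃ z ∈ S, z ∈ p.support
  | _, _, .nil, hu, hv => ⟨_, hAB ⟨hu, hv⟩, List.mem_singleton_self _⟩
  | _, _, .cons hadj p, hu, hv => by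
    rcases hG hadj with ⟨-, hA⟩ | ⟨hB, -⟩
    · obtain ⟨z, hz, hzp⟩ := exists_mem_support_of_adj_within hG hAB p hA hv
      exact ⟨z, hz, List.mem_cons_of_mem _ hzp⟩
    · exact ⟨_, hAB ⟨hu, hB⟩, List.mem_cons_self⟩

end SimpleGraph

namespace MVR

variable {W : Type*}

theorem exists_isMaxClique_superset [Finite W] {Ht : SimpleGraph W} {s : Set W}
    (hs : Ht.IsClique s) : ∃ t, IsMaxClique Ht t ∧ s ⊆ t := by
  obtain ⟨t, hst, ht⟩ := Finite.exists_le_maximal (p := Ht.IsClique) hs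
  exact ⟨t, ⟨ht.prop, fun t' ht' htt' => (ht.eq_of_le ht' htt').symm⟩, hst⟩

theorem USeparates.anti {H Ht : SimpleGraph W} {X Y Z : Set W} (hle : H ≤ Ht)
    (h : USeparates Ht X Y Z) : USeparates H X Y Z := fun u hu v hv p hp => by
  simpa only [SimpleGraph.Walk.support_mapLe_eq_support] using
    h u hu v hv (p.mapLe hle) (hp.mapLe hle)

theorem IsUIG.mSeparatedSets {H : SimpleGraph W} {G : MixedGraph W} (hUIG : IsUIG H G)
    {X Y Z : Set W} (hXY : Disjoint X Y) (hXZ : Disjoint X Z) (hYZ : Disjoint Y Z)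
    (hsep : USeparates H X Y Z) : G.MSeparatedSets X Y Z := by
  rcases X.eq_empty_or_nonempty with rfl | hX
  · exact fun u hu => absurd hu (Set.notMem_empty u)
  rcases Y.eq_empty_or_nonempty with rfl | hY
  · exact fun _ _ v hv => absurd hv (Set.notMem_empty v)
  exact hUIG X Y Z hX hY hXY hXZ hYZ hsep

section JunctionTree

variable {ι : Type*} {T : SimpleGraph ι} {C : ι → Set W} {Ht : SimpleGraph W}

theorem exists_subset_of_isClique [Finite W]
    (hcover : ∀ s : Set W, IsMaxClique Ht s → ∃ i : ι, C i = s) {s : Set W}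
    (hs : Ht.IsClique s) : ∃ i, s ⊆ C i := by
  obtain ⟨t, ht, hst⟩ := exists_isMaxClique_superset hs
  obtain ⟨i, rfl⟩ := hcover t ht
  exact ⟨i, hst⟩

theorem iUnion_eq_univ_of_cover [Finite W]
    (hcover : ∀ s : Set W, IsMaxClique Ht s → ∃ i : ι, C i = s) : ⋃ i, C i = Set.univ :=
  Set.eq_univ_of_forall fun v =>
    (exists_subset_of_isClique hcover (SimpleGraph.isClique_singleton v)).elim
      fun i hi => Set.mem_iUnion.mpr ⟨i, hi rfl⟩

theorem adj_mem_sides [Finite W] (hT : T.Connected)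
    (hcover : ∀ s : Set W, IsMaxClique Ht s → ∃ i : ι, C i = s) (i j : ι)
    ⦃a b : W⦄ (hab : Ht.Adj a b) :
    (a ∈ ⋃ k ∈ {k | (T.deleteEdges {s(i, j)}).Reachable i k}, C k ∧
      b ∈ ⋃ k ∈ {k | (T.deleteEdges {s(i, j)}).Reachable i k}, C k) ∨
    (a ∈ ⋃ k ∈ {k | (T.deleteEdges {s(i, j)}).Reachable j k}, C k ∧
      b ∈ ⋃ k ∈ {k | (T.deleteEdges {s(i, j)}).Reachable j k}, C k) := by
  obtain ⟨k, hk⟩ := exists_subset_of_isClique hcover (SimpleGraph.isClique_pair.mpr fun _ => hab)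
  have ha : a ∈ C k := hk (Set.mem_insert a _)
  have hb : b ∈ C k := hk (Set.mem_insert_of_mem a rfl)
  exact (hT.reachable_deleteEdges_or i j k).imp
    (fun hik => ⟨Set.mem_biUnion hik ha, Set.mem_biUnion hik hb⟩)
    (fun hjk => ⟨Set.mem_biUnion hjk ha, Set.mem_biUnion hjk hb⟩)

theorem sides_inter_subset (hT : T.IsTree)
    (hjunc : ∀ (i j : ι) (p : T.Walk i j), p.IsPath → ∀ k ∈ p.support, C i ∩ C j ⊆ C k)
    {i j : ι} (hij : T.Adj i j) :
    (⋃ k ∈ {k | (T.deleteEdges {s(i, j)}).Reachable i k}, C k) ∩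
      (⋃ k ∈ {k | (T.deleteEdges {s(i, j)}).Reachable j k}, C k) ⊆ C i ∩ C j := by
  rintro v ⟨hv₁, hv₂⟩
  obtain ⟨k, hik, hvk⟩ := Set.mem_iUnion₂.mp hv₁
  obtain ⟨l, hjl, hvl⟩ := Set.mem_iUnion₂.mp hv₂
  classical
  obtain ⟨w⟩ := hT.connected.preconnected k l
  obtain ⟨hi, hj⟩ := hT.isAcyclic.mem_support_of_reachable_deleteEdges hij hik hjl w.bypass
  exact ⟨hjunc k l _ w.bypass_isPath i hi ⟨hvk, hvl⟩, hjunc k l _ w.bypass_isPath j hj ⟨hvk, hvl⟩⟩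

end JunctionTree

end MVR

theorem MVR.junctionTree_of_UIG_isMSepTree_general
    {V : Type} [Fintype V] {ι : Type}
    (G : MVR.MixedGraph V)
    (H : SimpleGraph V) (hUIG : MVR.IsUIG H G)
    (T : SimpleGraph ι) (C : ι → Set V)
    (hJT : MVR.IsJunctionTreeFor T C H) :
    G.IsMSepTree T C := by
  obtain ⟨hT, Ht, hle, -, -, -, hcover, hjunc⟩ := hJT
  refine ⟨hT, MVR.iUnion_eq_univ_of_cover hcover, fun i j hij => ?_⟩
  have hsides := MVR.sides_inter_subset hT hjunc hij
  have hsep : MVR.USeparates Ht (_ \ (C i ∩ C j)) (_ \ (C i ∩ C j)) (C i ∩ C j) :=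
    fun u hu v hv p _ => p.exists_mem_support_of_adj_within
      (MVR.adj_mem_sides hT.connected hcover i j) hsides hu.1 hv.1
  refine hUIG.mSeparatedSets ?_ Set.disjoint_sdiff_left Set.disjoint_sdiff_left (hsep.anti hle)
  exact Set.disjoint_left.mpr fun v hv₁ hv₂ => hv₁.2 (hsides ⟨hv₁.1, hv₂.1⟩)

/-- A junction tree constructed from an undirected independence graph for
an MVR chain graph `G` on a finite vertex set is an m-separation tree for `G`. -/
theorem MVR.junctionTree_of_UIG_isMSepTree
    {V : Type} [Fintype V] {ι : Type} [Fintype ι]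
    (G : MVR.MixedGraph V) (hG : G.IsMVRChainGraph)
    (H : SimpleGraph V) (hUIG : MVR.IsUIG H G)
    (T : SimpleGraph ι) (C : ι → Set V)
    (hJT : MVR.IsJunctionTreeFor T C H) :
    G.IsMSepTree T C :=
  MVR.junctionTree_of_UIG_isMSepTree_general G H hUIG T C hJT
end

section
/- Let T be an m-separation tree for an MVR chain graph G = (V, E), and let K be a separator of T whose removal splits T into two subtrees with node-unions V1 and V2. Let ρ be a chain in G from a vertex u ∈ V1 \ K to a vertex v ∈ V2 \ K, and let W be the set of nonendpoint vertices on ρ. Then ρ is blocked by W ∩ K and by any set Z with W ∩ K ⊆ Z ⊆ V \ {u, v}. -/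
/-!
If the chain were m-connecting given `Z`, its noncolliders would avoid the separator `K`: an inner
vertex in `K` lies in `Z`, and the endpoints lie outside `K`. Nothing more is used. Take a
shortest chain from `V₁ \ K` to `V₂ \ K` whose noncolliders avoid `K`. The nodes of the tree cover
`V`, so a vertex outside `K` lies in `V₁` or in `V₂`, and an inner vertex outside `K` would cut
off a shorter such chain. Hence every inner vertex lies in `K` and is a collider. A vertex visited
twice is then a collider at both visits, so the loop between the visits can be cut out. The
shortest chain thus has distinct vertices, colliders in `K` and noncolliders outside `K`: it is
m-connecting given `K`, contradicting the m-separation of `V₁ \ K` and `V₂ \ K` by `K`.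
-/

namespace MVR
namespace MixedGraph

variable {V : Type u} {G : MixedGraph V}

open scoped List

/-- A vertex of a chain together with the arrowhead marks at it of the edge arriving from the
left (`inHead`) and of the edge leaving to the right (`outHead`). -/
structure Hinge (V : Type u) where
  inHead : Bool
  vertex : V
  outHead : Bool

def Hinge.IsCollider (h : Hinge V) : Prop :=
  h.inHead = true ∧ h.outHead = true

namespace Chain

def append : {a b c : V} → G.Chain a b → G.Chain b c → G.Chain a c
  | _, _, _, .nil _, q => q
  | _, _, _, .fwd h p, q => .fwd h (p.append q)
  | _, _, _, .rev h p, q => .rev h (p.append q)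
  | _, _, _, .bid h p, q => .bid h (p.append q)

/-- The arrowhead mark at the last vertex, `m` for a chain without edges. -/
def endHead (m : Bool) : {a b : V} → G.Chain a b → Bool
  | _, _, .nil _ => m
  | _, _, .fwd _ p => p.endHead true
  | _, _, .rev _ p => p.endHead false
  | _, _, .bid _ p => p.endHead true

/-- The hinges at all vertices but the last; the first vertex gets the incoming mark `m`. -/
def hinges (m : Bool) : {a b : V} → G.Chain a b → List (Hinge V)
  | _, _, .nil _ => []
  | a, _, .fwd _ p => ⟨m, a, false⟩ :: p.hinges true
  | a, _, .rev _ p => ⟨m, a, true⟩ :: p.hinges false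
  | a, _, .bid _ p => ⟨m, a, true⟩ :: p.hinges true

/-- Noncolliders lie outside `K`, the first vertex counting as a noncollider. -/
def NoncollidersAvoid (K : Set V) {a b : V} (p : G.Chain a b) : Prop :=
  ∀ h ∈ p.hinges false, ¬ h.IsCollider → h.vertex ∉ K

lemma hinges_append {a b c : V} (p : G.Chain a b) (q : G.Chain b c) (m : Bool) :
    (p.append q).hinges m = p.hinges m ++ q.hinges (p.endHead m) := by
  induction p generalizing m <;> simp_all [append, hinges, endHead]

lemma support_ne_nil {a b : V} (p : G.Chain a b) : p.support ≠ [] := by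
  cases p <;> simp [support]

lemma support_eq_map_hinges {a b : V} (p : G.Chain a b) (m : Bool) :
    p.support = (p.hinges m).map Hinge.vertex ++ [b] := by
  induction p generalizing m with
  | nil => rfl
  | fwd _ q ih => simp [support, hinges, ih true]
  | rev _ q ih => simp [support, hinges, ih false]
  | bid _ q ih => simp [support, hinges, ih true]

lemma mConnecting_iff_hinges {a b : V} (p : G.Chain a b) (m : Bool) (Z : Set V) :
    p.MConnecting Z ↔ ∀ h ∈ (p.hinges m).tail,
      (h.IsCollider → h.vertex ∈ G.Anc Z) ∧ (¬ h.IsCollider → h.vertex ∉ Z) := by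
  induction p generalizing m with
  | nil => simp [MConnecting, support, hinges]
  | fwd _ q ih | rev _ q ih | bid _ q ih =>
    have split_nat {P : ℕ → Prop} : (∀ i, P i) ↔ P 0 ∧ ∀ i, P (i + 1) :=
      ⟨fun h => ⟨h 0, fun i => h _⟩, fun h i => by cases i; exacts [h.1, h.2 _]⟩
    unfold MConnecting at ih ⊢
    rw [split_nat]
    specialize ih m
    cases q <;>
      simp [ColliderAt, support, marks, hinges, Hinge.IsCollider, List.length_pos_iff,
        support_ne_nil] at ih ⊢ <;>
      simp [ih]

lemma exists_split_of_hinges_eq {a b : V} (p : G.Chain a b) {m : Bool}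
    {L L' : List (Hinge V)} {h : Hinge V} (hp : p.hinges m = L ++ h :: L') :
    ∃ (p₁ : G.Chain a h.vertex) (p₂ : G.Chain h.vertex b),
      p₁.hinges m = L ∧ p₁.endHead m = h.inHead ∧
        ∀ m', p₂.hinges m' = ⟨m', h.vertex, h.outHead⟩ :: L' := by
  induction p generalizing m L with
  | nil => simp [hinges] at hp
  | fwd e q ih =>
    rcases L with _ | ⟨k, L⟩
    · obtain ⟨rfl, rfl⟩ := List.cons_eq_cons.1 hp
      exact ⟨.nil _, .fwd e q, rfl, rfl, fun _ => rfl⟩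
    · obtain ⟨rfl, hq⟩ := List.cons_eq_cons.1 hp
      obtain ⟨q₁, q₂, h₁, h₂, h₃⟩ := ih hq
      exact ⟨.fwd e q₁, q₂, by rw [hinges, h₁], h₂, h₃⟩
  | rev e q ih =>
    rcases L with _ | ⟨k, L⟩
    · obtain ⟨rfl, rfl⟩ := List.cons_eq_cons.1 hp
      exact ⟨.nil _, .rev e q, rfl, rfl, fun _ => rfl⟩
    · obtain ⟨rfl, hq⟩ := List.cons_eq_cons.1 hp
      obtain ⟨q₁, q₂, h₁, h₂, h₃⟩ := ih hq
      exact ⟨.rev e q₁, q₂, by rw [hinges, h₁], h₂, h₃⟩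
  | bid e q ih =>
    rcases L with _ | ⟨k, L⟩
    · obtain ⟨rfl, rfl⟩ := List.cons_eq_cons.1 hp
      exact ⟨.nil _, .bid e q, rfl, rfl, fun _ => rfl⟩
    · obtain ⟨rfl, hq⟩ := List.cons_eq_cons.1 hp
      obtain ⟨q₁, q₂, h₁, h₂, h₃⟩ := ih hq
      exact ⟨.bid e q₁, q₂, by rw [hinges, h₁], h₂, h₃⟩

lemma exists_shortcut {a b : V} (p : G.Chain a b) {m : Bool} {h h' : Hinge V}
    (hsub : [h, h'] <+ p.hinges m) (hv : h.vertex = h'.vertex) (hin : h.inHead = h'.inHead) :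
    ∃ p' : G.Chain a b,
      p'.hinges m <+ p.hinges m ∧ (p'.hinges m).length < (p.hinges m).length := by
  obtain ⟨r₁, r₂, hp, hr₁, hr₂⟩ := List.cons_sublist_iff.1 hsub
  obtain ⟨L₁, M, rfl⟩ := List.append_of_mem hr₁
  obtain ⟨N, L₃, rfl⟩ := List.append_of_mem (List.singleton_sublist.1 hr₂)
  obtain ⟨l, x, r⟩ := h
  obtain ⟨l', x', r'⟩ := h'
  obtain ⟨rfl, rfl⟩ : x = x' ∧ l = l' := ⟨hv, hin⟩
  obtain ⟨p₁, p₂, h₁, he, h₂⟩ :=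
    p.exists_split_of_hinges_eq (m := m) (L := L₁) (h := ⟨l, x, r⟩)
      (L' := M ++ N ++ ⟨l, x, r'⟩ :: L₃) (by simp [hp])
  obtain ⟨-, s, -, -, hs⟩ :=
    p₂.exists_split_of_hinges_eq (m := l) (L := ⟨l, x, r⟩ :: M ++ N) (h := ⟨l, x, r'⟩)
      (L' := L₃) (by simp [h₂])
  refine ⟨p₁.append s, ?_, ?_⟩ <;> simp only [hinges_append, h₁, he, hs, hp]
  · simp only [List.append_assoc, List.cons_append]
    refine (List.Sublist.cons _ ?_).append_left _
    exact (List.sublist_append_right _ _).trans (List.sublist_append_right _ _)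
  · simp only [List.length_append, List.length_cons]
    omega

lemma MConnecting.noncollidersAvoid {Z K : Set V} {a b : V} {p : G.Chain a b}
    (hp : p.MConnecting Z) (ha : a ∉ K) (hZ : ∀ w ∈ p.support, w ∈ K → w ∈ Z) :
    p.NoncollidersAvoid K := by
  intro h hh hc hx
  have hsupp : h.vertex ∈ p.support := by
    rw [p.support_eq_map_hinges false]
    exact List.mem_append_left _ (List.mem_map_of_mem hh)
  rw [mConnecting_iff_hinges _ false] at hp
  cases p with
  | nil => simp [hinges] at hh
  | fwd _ q | rev _ q | bid _ q =>
    rcases List.mem_cons.1 hh with rfl | hh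
    · exact ha hx
    · exact (hp h hh).2 hc (hZ _ hsupp hx)

lemma NoncollidersAvoid.exists_prefix {K : Set V} {a b : V} {p : G.Chain a b}
    (hp : p.NoncollidersAvoid K) {h : Hinge V} (hh : h ∈ p.hinges false) :
    ∃ p₁ : G.Chain a h.vertex,
      (p₁.hinges false).length < (p.hinges false).length ∧ p₁.NoncollidersAvoid K := by
  obtain ⟨L, L', hL⟩ := List.append_of_mem hh
  obtain ⟨p₁, -, h₁, -⟩ := p.exists_split_of_hinges_eq hL
  refine ⟨p₁, by simp [hL, h₁], fun k hk => hp k ?_⟩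
  rw [hL]
  exact List.mem_append_left _ (h₁ ▸ hk)

lemma NoncollidersAvoid.exists_suffix {K : Set V} {a b : V} {p : G.Chain a b}
    (hp : p.NoncollidersAvoid K) {h : Hinge V} (hh : h ∈ (p.hinges false).tail)
    (hx : h.vertex ∉ K) :
    ∃ p₂ : G.Chain h.vertex b,
      (p₂.hinges false).length < (p.hinges false).length ∧ p₂.NoncollidersAvoid K := by
  obtain ⟨k, t, ht⟩ : ∃ k t, p.hinges false = k :: t :=
    List.exists_cons_of_ne_nil (List.ne_nil_of_mem (List.mem_of_mem_tail hh))
  obtain ⟨L, L', rfl⟩ := List.append_of_mem (by simpa [ht] using hh)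
  obtain ⟨-, p₂, -, -, h₂⟩ := p.exists_split_of_hinges_eq (L := k :: L) ht
  refine ⟨p₂, by simp [ht, h₂], ?_⟩
  rw [NoncollidersAvoid, h₂]
  simp only [List.mem_cons]
  rintro k' (rfl | hk')
  · exact fun _ => hx
  · exact hp k' (by simp [ht, hk'])

lemma support_nodup {a b : V} {p : G.Chain a b} {m : Bool}
    (hp : (p.hinges m).Pairwise fun h h' => h.vertex ≠ h'.vertex)
    (hb : ∀ h ∈ p.hinges m, h.vertex ≠ b) : p.support.Nodup := by
  rw [p.support_eq_map_hinges m, List.nodup_append]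
  refine ⟨List.pairwise_map.2 hp, List.nodup_singleton b, ?_⟩
  simpa using hb

lemma NoncollidersAvoid.mConnecting {K : Set V} {a b : V} {p : G.Chain a b}
    (hp : p.NoncollidersAvoid K) (hK : ∀ h ∈ (p.hinges false).tail, h.vertex ∈ K) :
    p.MConnecting K :=
  (p.mConnecting_iff_hinges false K).2 fun h hh =>
    ⟨fun _ => Or.inr (hK h hh), fun hc => absurd (hK h hh) (hp h (List.mem_of_mem_tail hh) hc)⟩

end Chain

lemma MSeparatedSets.not_noncollidersAvoid {V₁ V₂ K : Set V}
    (hsep : G.MSeparatedSets V₁ V₂ K) (hcov : Kᶜ ⊆ V₁ ∪ V₂) {a b : V} (p : G.Chain a b)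
    (ha : a ∈ V₁) (hb : b ∈ V₂) :
    ¬ p.NoncollidersAvoid K := by
  induction hn : (p.hinges false).length using Nat.strong_induction_on generalizing a b with
  | _ n ih =>
  intro hp
  by_cases hV₂ : ∃ h ∈ p.hinges false, h.vertex ∈ V₂
  · obtain ⟨h, hh, hx⟩ := hV₂
    obtain ⟨p₁, hlen, hp₁⟩ := hp.exists_prefix hh
    exact ih _ (hn ▸ hlen) p₁ ha hx rfl hp₁
  by_cases hK : ∃ h ∈ (p.hinges false).tail, h.vertex ∉ K
  · obtain ⟨h, hh, hx⟩ := hK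
    have hx₁ : h.vertex ∈ V₁ :=
      (hcov hx).resolve_right fun hx₂ => hV₂ ⟨h, List.mem_of_mem_tail hh, hx₂⟩
    obtain ⟨p₂, hlen, hp₂⟩ := hp.exists_suffix hh hx
    exact ih _ (hn ▸ hlen) p₂ hx₁ hb rfl hp₂
  push Not at hV₂ hK
  have hcoll : ∀ h ∈ p.hinges false, h.vertex ∈ K → h.IsCollider :=
    fun h hh hx => by_contra fun hc => hp h hh hc hx
  by_cases hnd : (p.hinges false).Pairwise (fun h h' => h.vertex ≠ h'.vertex)
  · exact hsep a ha b hb p (Chain.support_nodup hnd fun h hh hxb => hV₂ h hh (hxb ▸ hb))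
      (hp.mConnecting hK)
  · obtain ⟨h, h', hsub, hv⟩ :
        ∃ h h', [h, h'] <+ p.hinges false ∧ h.vertex = h'.vertex := by
      simpa [List.pairwise_iff_forall_sublist] using hnd
    have hx' : h'.vertex ∈ K := hK h' (hsub.tail.subset (by simp))
    have hx : h.vertex ∈ K := hv ▸ hx'
    have hin : h.inHead = h'.inHead :=
      (hcoll h (hsub.subset (by simp)) hx).1.trans (hcoll h' (hsub.subset (by simp)) hx').1.symm
    obtain ⟨p', hsub', hlen⟩ := p.exists_shortcut hsub hv hin
    exact ih _ (hn ▸ hlen) p' ha hb rfl fun k hk => hp k (hsub'.subset hk)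

end MixedGraph
end MVR

namespace SimpleGraph

variable {ι : Type v} {T : SimpleGraph ι}

lemma Reachable.deleteEdges_left_or_right {x y k : ι} (h : T.Reachable x k) :
    (T.deleteEdges {s(x, y)}).Reachable x k ∨ (T.deleteEdges {s(x, y)}).Reachable y k := by
  have extend : ∀ {a : ι} (w : T.Walk a k),
      (T.deleteEdges {s(x, y)}).Reachable x a ∨ (T.deleteEdges {s(x, y)}).Reachable y a →
      (T.deleteEdges {s(x, y)}).Reachable x k ∨ (T.deleteEdges {s(x, y)}).Reachable y k := by
    clear h
    intro a w
    induction w with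
    | nil => exact id
    | @cons a c _ hadj _ ih =>
      intro hside
      apply ih
      by_cases he : s(a, c) = s(x, y)
      · rcases Sym2.eq_iff.1 he with ⟨-, rfl⟩ | ⟨-, rfl⟩
        exacts [Or.inr Reachable.rfl, Or.inl Reachable.rfl]
      · have hadj' : (T.deleteEdges {s(x, y)}).Adj a c := by simp [hadj, he]
        exact hside.imp (·.trans hadj'.reachable) (·.trans hadj'.reachable)
  obtain ⟨w⟩ := h
  exact extend w (Or.inl Reachable.rfl)

lemma Connected.compl_subset_biUnion_reachable_deleteEdges {V : Type u} (hT : T.Connected)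
    {C : ι → Set V} (hC : ⋃ k, C k = Set.univ) (x y : ι) (K : Set V) :
    Kᶜ ⊆ (⋃ k ∈ {k | (T.deleteEdges {s(x, y)}).Reachable x k}, C k) \ K ∪
      (⋃ k ∈ {k | (T.deleteEdges {s(x, y)}).Reachable y k}, C k) \ K := by
  intro v hv
  obtain ⟨k, hk⟩ := Set.mem_iUnion.1 (hC ▸ Set.mem_univ v)
  exact ((hT.preconnected x k).deleteEdges_left_or_right).imp
    (fun hx => ⟨Set.mem_biUnion hx hk, hv⟩) (fun hy => ⟨Set.mem_biUnion hy hk, hv⟩)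

end SimpleGraph

theorem MVR.blocked_of_separator_general
    {V : Type} {ι : Type}
    (G : MVR.MixedGraph V)
    (T : SimpleGraph ι) (C : ι → Set V) (hT : G.IsMSepTree T C)
    (i j : ι) (hij : T.Adj i j)
    {u v : V}
    (hu : u ∈ (⋃ k ∈ {k : ι | (T.deleteEdges {s(i, j)}).Reachable i k}, C k) \
      (C i ∩ C j))
    (hv : v ∈ (⋃ k ∈ {k : ι | (T.deleteEdges {s(i, j)}).Reachable j k}, C k) \
      (C i ∩ C j))
    (p : G.Chain u v)
    (W : Set V) (hW : W = {w : V | w ∈ p.support ∧ w ≠ u ∧ w ≠ v}) :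
    p.Blocked (W ∩ (C i ∩ C j)) ∧
      ∀ Z : Set V, W ∩ (C i ∩ C j) ⊆ Z → Z ⊆ Set.univ \ {u, v} → p.Blocked Z := by
  obtain ⟨hTree, hcover, hsep⟩ := hT
  have hcov := hTree.connected.compl_subset_biUnion_reachable_deleteEdges hcover i j (C i ∩ C j)
  have blocked : ∀ Z, W ∩ (C i ∩ C j) ⊆ Z → p.Blocked Z := by
    intro Z hZ hp
    refine (hsep i j hij).not_noncollidersAvoid hcov p hu hv (hp.noncollidersAvoid hu.2 ?_)
    intro w hw hwK
    exact hZ ⟨hW ▸ ⟨hw, fun h => hu.2 (h ▸ hwK), fun h => hv.2 (h ▸ hwK)⟩, hwK⟩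
  exact ⟨blocked _ subset_rfl, fun Z hZ _ => blocked Z hZ⟩

/-- Let `T` be an m-separation tree for an MVR chain graph `G`, `K` the
separator of an edge `(i, j)` of `T` splitting the node-unions into `V₁` and `V₂`, and
`ρ` a chain from `u ∈ V₁ \ K` to `v ∈ V₂ \ K` with nonendpoint-vertex set `W`.  Then
`ρ` is blocked by `W ∩ K` and by every `Z` with `W ∩ K ⊆ Z ⊆ V \ {u, v}`. -/
theorem MVR.blocked_of_separator
    {V : Type} {ι : Type}
    (G : MVR.MixedGraph V) (hG : G.IsMVRChainGraph)
    (T : SimpleGraph ι) (C : ι → Set V) (hT : G.IsMSepTree T C)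
    (i j : ι) (hij : T.Adj i j)
    {u v : V}
    (hu : u ∈ (⋃ k ∈ {k : ι | (T.deleteEdges {s(i, j)}).Reachable i k}, C k) \
      (C i ∩ C j))
    (hv : v ∈ (⋃ k ∈ {k : ι | (T.deleteEdges {s(i, j)}).Reachable j k}, C k) \
      (C i ∩ C j))
    (p : G.Chain u v) (hp : p.support.Nodup)
    (W : Set V) (hW : W = {w : V | w ∈ p.support ∧ w ≠ u ∧ w ≠ v}) :
    p.Blocked (W ∩ (C i ∩ C j)) ∧
      ∀ Z : Set V, W ∩ (C i ∩ C j) ⊆ Z → Z ⊆ Set.univ \ {u, v} → p.Blocked Z :=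
  MVR.blocked_of_separator_general G T C hT i j hij hu hv p W hW
end

section
/- Let u and v be two non-adjacent vertices in an MVR chain graph G, and let ρ be a chain from u to v whose vertex set is not contained in An({u, v}). Then ρ is blocked by every subset S of an({u, v}) with u, v ∉ S. -/
/-!
Following the tails of an m-connecting chain from any of its vertices leads, along a
directed path, to an endpoint or to a collider. Colliders lie in `An(S)`, which is contained
in `An({u, v})` when `S ⊆ an({u, v})`, so an m-connecting chain given `S` stays inside
`An({u, v})`.
-/

namespace MVR.MixedGraph

variable {V : Type*} {G : MixedGraph V}

def IsAncestral (G : MixedGraph V) (A : Set V) : Prop :=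
  ∀ ⦃x y : V⦄, G.dir x y → y ∈ A → x ∈ A

lemma isAncestral_Anc (X : Set V) : G.IsAncestral (G.Anc X) := by
  rintro x y hxy (⟨t, ht, hyt⟩ | hy)
  · exact Or.inl ⟨t, ht, .head hxy hyt⟩
  · exact Or.inl ⟨y, hy, .single hxy⟩

lemma IsAncestral.Anc_subset {A Z : Set V} (hA : G.IsAncestral A) (hZ : Z ⊆ A) :
    G.Anc Z ⊆ A := by
  rintro x (⟨z, hz, hxz⟩ | hx)
  · induction hxz using Relation.TransGen.head_induction_on with
    | single h => exact hA h (hZ hz)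
    | head h _ ih => exact hA h ih
  · exact hZ hx

namespace Chain

lemma support_length {a b : V} (p : G.Chain a b) : p.support.length = p.marks.length + 1 := by
  induction p <;> simp [support, marks, *]

variable {Z : Set V} {a b c : V} {p : G.Chain a b} {q : G.Chain c b} {m : Bool × Bool}

lemma MConnecting.tail (hs : p.support = a :: q.support) (hmk : p.marks = m :: q.marks)
    (h : p.MConnecting Z) : q.MConnecting Z := by
  intro i w hw hlen
  have hcol : q.ColliderAt i ↔ p.ColliderAt (i + 1) := by
    simp only [ColliderAt, hmk, List.getElem?_cons_succ]
  have := h (i + 1) w (by simpa [hs] using hw) (by simp [hs]; omega)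
  exact ⟨fun hc => this.1 (hcol.1 hc), fun hc => this.2 (mt hcol.2 hc)⟩

lemma MConnecting.mem_Anc_of_collider {m' : Bool × Bool}
    (hs : p.support = a :: q.support) (hmk : p.marks = m :: q.marks)
    (hq : q.marks[0]? = some m') (hm : m.2 = true) (hm' : m'.1 = true)
    (h : p.MConnecting Z) : c ∈ G.Anc Z := by
  have hc : p.support[0 + 1]? = some c := by
    cases q <;> simp_all [support]
  have hlen : 0 + 2 < p.support.length := by
    have := q.support_length
    cases hq' : q.marks <;> simp_all
  refine (h 0 c hc hlen).1 ⟨m, m', by simp [hmk], ?_, hm, hm'⟩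
  simpa [hmk] using hq

variable {A : Set V}

/-- `hs`, `hmk`, `hm` say that `p` is `q` preceded by an edge with an arrowhead at `c`. -/
lemma MConnecting.mem_of_arrowhead (hA : G.IsAncestral A) (hZ : Z ⊆ A)
    (q : G.Chain c b) (hb : b ∈ A) (hs : p.support = a :: q.support)
    (hmk : p.marks = m :: q.marks) (hm : m.2 = true) (h : p.MConnecting Z) : c ∈ A := by
  induction q generalizing a m with
  | nil => exact hb
  | fwd hcd q ih => exact hA hcd (ih hb rfl rfl rfl (h.tail hs hmk))
  | rev _ _ => exact hA.Anc_subset hZ (h.mem_Anc_of_collider hs hmk rfl hm rfl)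
  | bid _ _ => exact hA.Anc_subset hZ (h.mem_Anc_of_collider hs hmk rfl hm rfl)

lemma MConnecting.support_subset (hA : G.IsAncestral A) (hZ : Z ⊆ A) (h : p.MConnecting Z)
    (ha : a ∈ A) (hb : b ∈ A) : ∀ w ∈ p.support, w ∈ A := by
  induction p with
  | nil => simpa [support] using ha
  | fwd _ q ih =>
    exact List.forall_mem_cons.2
      ⟨ha, ih (h.tail rfl rfl) (h.mem_of_arrowhead hA hZ q hb rfl rfl rfl) hb⟩
  | rev hca q ih => exact List.forall_mem_cons.2 ⟨ha, ih (h.tail rfl rfl) (hA hca ha) hb⟩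
  | bid _ q ih =>
    exact List.forall_mem_cons.2
      ⟨ha, ih (h.tail rfl rfl) (h.mem_of_arrowhead hA hZ q hb rfl rfl rfl) hb⟩

end Chain

end MVR.MixedGraph

theorem MVR.blocked_of_not_subset_Anc_general
    {V : Type} (G : MVR.MixedGraph V)
    {u v : V}
    (p : G.Chain u v)
    (hρ : ¬ ∀ w ∈ p.support, w ∈ G.Anc {u, v})
    (S : Set V) (hS : S ⊆ G.anc {u, v}) :
    p.Blocked S := fun h =>
  hρ (h.support_subset (MixedGraph.isAncestral_Anc _) (hS.trans Set.subset_union_left)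
    (Or.inr (Set.mem_insert u _)) (Or.inr (Set.mem_insert_of_mem u rfl)))

/-- If `u` and `v` are two non-adjacent vertices of an MVR chain graph `G`
and `ρ` is a chain from `u` to `v` whose vertex set is not contained in `An({u, v})`,
then `ρ` is blocked by every subset `S` of `an({u, v})` with `u, v ∉ S`. -/
theorem MVR.blocked_of_not_subset_Anc
    {V : Type} (G : MVR.MixedGraph V) (hG : G.IsMVRChainGraph)
    {u v : V} (hne : u ≠ v) (hnadj : ¬ G.Adjacent u v)
    (p : G.Chain u v) (hp : p.support.Nodup)
    (hρ : ¬ ∀ w ∈ p.support, w ∈ G.Anc {u, v})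
    (S : Set V) (hS : S ⊆ G.anc {u, v}) (huS : u ∉ S) (hvS : v ∉ S) :
    p.Blocked S :=
  MVR.blocked_of_not_subset_Anc_general G p hρ S hS
end

section
/- Let T be an m-separation tree for an MVR chain graph G = (V, E). If (u, w, v) is a v-structure of G, i.e., u and v are non-adjacent in G, G contains an edge u → w or u ↔ w, and G contains an edge v → w or v ↔ w, then (a) there exists a node of T containing all three of u, v, and w, and (b) w ∉ S for every set S ⊆ V \ {u, v} that m-separates u and v in G. -/
/-!
A v-structure `u *→ w ←* v` is itself a chain from `u` to `v` with a collider at `w`, so no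
set containing `w` m-separates `u` and `v`; this is (b). For (a), walk along the tree path
from a node containing `{u, w}` to one containing `{v, w}`. At the first tree edge whose far
endpoint misses `u` or `w`, either `v` and `w` already lie in the current node, or the
separator of that edge m-separates a vertex of `{u, w}` from a vertex of `{v, w}`. The
separator contains `w`, else it would separate `w` from itself; but then every such pair is
m-connected, by an edge or by the v-structure.
-/

namespace MVR

namespace MixedGraph

variable {V : Type} {G : MixedGraph V}

lemma ne_of_dir_or_bi {a b : V} (h : G.dir a b ∨ G.bi a b) : a ≠ b := by
  rintro rfl
  exact h.elim (G.dir_irrefl a) (G.bi_irrefl a)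

lemma Adjacent.symm {a b : V} (h : G.Adjacent a b) : G.Adjacent b a := by
  rcases h with h | h | h
  exacts [Or.inr (Or.inl h), Or.inl h, Or.inr (Or.inr (G.bi_symm h))]

lemma adjacent_of_dir_or_bi {a b : V} (h : G.dir a b ∨ G.bi a b) : G.Adjacent a b :=
  h.elim Or.inl (Or.inr ∘ Or.inr)

namespace Chain

lemma mConnecting_of_length_le_two {a b : V} (p : G.Chain a b) (hp : p.support.length ≤ 2)
    (Z : Set V) : p.MConnecting Z := by
  intro i x _ hi
  omega

lemma mConnecting_of_collider_mem {a b w : V} (p : G.Chain a b) (hp : p.support = [a, w, b])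
    (hc : p.ColliderAt 0) {Z : Set V} (hw : w ∈ Z) : p.MConnecting Z := by
  intro i x hx hi
  rw [hp] at hx hi
  obtain rfl : i = 0 := by simp at hi; omega
  obtain rfl : w = x := by simpa using hx
  exact ⟨fun _ => Or.inr hw, fun hnc => absurd hc hnc⟩

end Chain

lemma not_mSeparated_self (x : V) (Z : Set V) : ¬ G.MSeparated x x Z := fun h =>
  h (.nil x) (by simp [Chain.support])
    ((Chain.nil x).mConnecting_of_length_le_two (by simp [Chain.support]) Z)

lemma Adjacent.not_mSeparated {a b : V} (h : G.Adjacent a b) (Z : Set V) :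
    ¬ G.MSeparated a b Z := by
  obtain ⟨p, hp⟩ : ∃ p : G.Chain a b, p.support = [a, b] := by
    rcases h with h | h | h
    exacts [⟨.fwd h (.nil b), rfl⟩, ⟨.rev h (.nil b), rfl⟩, ⟨.bid h (.nil b), rfl⟩]
  have hab : a ≠ b := by
    rcases h with h | h | h
    exacts [ne_of_dir_or_bi (.inl h), (ne_of_dir_or_bi (.inl h)).symm,
      ne_of_dir_or_bi (.inr h)]
  intro hsep
  exact hsep p (by simp [hp, hab]) (p.mConnecting_of_length_le_two (by simp [hp]) Z)

lemma exists_chain_colliderAt {u v w : V} (huw : G.dir u w ∨ G.bi u w)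
    (hvw : G.dir v w ∨ G.bi v w) : ∃ p : G.Chain u v, p.support = [u, w, v] ∧ p.ColliderAt 0 := by
  rcases huw with h₁ | h₁ <;> rcases hvw with h₂ | h₂
  exacts [⟨.fwd h₁ (.rev h₂ (.nil v)), rfl, _, _, rfl, rfl, rfl, rfl⟩,
    ⟨.fwd h₁ (.bid (G.bi_symm h₂) (.nil v)), rfl, _, _, rfl, rfl, rfl, rfl⟩,
    ⟨.bid h₁ (.rev h₂ (.nil v)), rfl, _, _, rfl, rfl, rfl, rfl⟩,
    ⟨.bid h₁ (.bid (G.bi_symm h₂) (.nil v)), rfl, _, _, rfl, rfl, rfl, rfl⟩]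

lemma not_mSeparated_of_collider_mem {u v w : V} (huv : u ≠ v) (huw : G.dir u w ∨ G.bi u w)
    (hvw : G.dir v w ∨ G.bi v w) {Z : Set V} (hw : w ∈ Z) : ¬ G.MSeparated u v Z := by
  obtain ⟨p, hp, hc⟩ := exists_chain_colliderAt huw hvw
  have hnodup : p.support.Nodup := by
    simp [hp, huv, ne_of_dir_or_bi huw, (ne_of_dir_or_bi hvw).symm]
  exact fun hsep => hsep p hnodup (p.mConnecting_of_collider_mem hp hc hw)

namespace IsMSepTree

variable {ι : Type} {T : SimpleGraph ι} {C : ι → Set V}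

lemma exists_mem (hT : G.IsMSepTree T C) (x : V) : ∃ i, x ∈ C i :=
  Set.mem_iUnion.1 (hT.2.1 ▸ Set.mem_univ x)

/-- A walk `q` from `i'` avoiding `i` places `j` on the far side of the tree edge `i — i'`. -/
lemma mSeparated_across (hT : G.IsMSepTree T C) {i i' j : ι} (hadj : T.Adj i i')
    (q : T.Walk i' j) (hq : i ∉ q.support) {x y : V} (hx : x ∈ C i) (hxS : x ∉ C i ∩ C i')
    (hy : y ∈ C j) (hyS : y ∉ C i ∩ C i') : G.MSeparated x y (C i ∩ C i') := by
  have hreach : (T.deleteEdges {s(i, i')}).Reachable i' j := by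
    refine ⟨q.toDeleteEdges _ fun e he => ?_⟩
    rintro rfl
    exact hq (q.fst_mem_support_of_mem_edges he)
  exact hT.2.2 i i' hadj x ⟨Set.mem_iUnion₂.2 ⟨i, .refl i, hx⟩, hxS⟩
    y ⟨Set.mem_iUnion₂.2 ⟨j, hreach, hy⟩, hyS⟩

lemma exists_node_of_isPath (hT : G.IsMSepTree T C) {A B : Set V}
    (hAB : ∀ a ∈ A, ∀ b ∈ B, ∀ S, A ∩ B ⊆ S → ¬ G.MSeparated a b S) {i j : ι}
    (q : T.Walk i j) (hq : q.IsPath) (hA : A ⊆ C i) (hB : B ⊆ C j) :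
    ∃ k, A ⊆ C k ∧ B ⊆ C k := by
  induction q with
  | nil => exact ⟨_, hA, hB⟩
  | @cons i i' j hadj q ih =>
    rw [SimpleGraph.Walk.cons_isPath_iff] at hq
    by_cases hA' : A ⊆ C i'
    · exact ih hq.1 hA' hB
    by_cases hB' : B ⊆ C i
    · exact ⟨i, hA, hB'⟩
    obtain ⟨a, ha, ha'⟩ := Set.not_subset.1 hA'
    obtain ⟨b, hb, hb'⟩ := Set.not_subset.1 hB'
    have hS : A ∩ B ⊆ C i ∩ C i' := fun x hx => by
      by_contra hxS
      exact not_mSeparated_self x _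
        (hT.mSeparated_across hadj q hq.2 (hA hx.1) hxS (hB hx.2) hxS)
    exact absurd (hT.mSeparated_across hadj q hq.2 (hA ha) (fun h => ha' h.2) (hB hb)
      (fun h => hb' h.1)) (hAB a ha b hb _ hS)

lemma exists_node_of_not_mSeparated (hT : G.IsMSepTree T C) {A B : Set V}
    (hAB : ∀ a ∈ A, ∀ b ∈ B, ∀ S, A ∩ B ⊆ S → ¬ G.MSeparated a b S) {i j : ι}
    (hA : A ⊆ C i) (hB : B ⊆ C j) : ∃ k, A ⊆ C k ∧ B ⊆ C k := by
  classical
  obtain ⟨q⟩ := hT.1.connected.preconnected i j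
  exact hT.exists_node_of_isPath hAB q.bypass q.bypass_isPath hA hB

lemma exists_node_of_adjacent (hT : G.IsMSepTree T C) {x y : V} (h : G.Adjacent x y) :
    ∃ k, x ∈ C k ∧ y ∈ C k := by
  obtain ⟨i, hx⟩ := hT.exists_mem x
  obtain ⟨j, hy⟩ := hT.exists_mem y
  have hxy : ∀ a ∈ ({x} : Set V), ∀ b ∈ ({y} : Set V), ∀ S, {x} ∩ {y} ⊆ S →
      ¬ G.MSeparated a b S := by
    rintro a rfl b rfl S -
    exact h.not_mSeparated S
  simpa using hT.exists_node_of_not_mSeparated hxy (Set.singleton_subset_iff.2 hx)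
    (Set.singleton_subset_iff.2 hy)

lemma exists_node_of_collider (hT : G.IsMSepTree T C) {u v w : V} (huv : u ≠ v)
    (huw : G.dir u w ∨ G.bi u w) (hvw : G.dir v w ∨ G.bi v w) :
    ∃ k, u ∈ C k ∧ v ∈ C k ∧ w ∈ C k := by
  obtain ⟨i, hui, hwi⟩ := hT.exists_node_of_adjacent (adjacent_of_dir_or_bi huw)
  obtain ⟨j, hvj, hwj⟩ := hT.exists_node_of_adjacent (adjacent_of_dir_or_bi hvw)
  have hAB : ∀ a ∈ ({u, w} : Set V), ∀ b ∈ ({v, w} : Set V), ∀ S, {u, w} ∩ {v, w} ⊆ S →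
      ¬ G.MSeparated a b S := by
    rintro a (rfl | rfl) b (rfl | rfl) S hS
    · exact not_mSeparated_of_collider_mem huv huw hvw (hS ⟨.inr rfl, .inr rfl⟩)
    · exact (adjacent_of_dir_or_bi huw).not_mSeparated S
    · exact (adjacent_of_dir_or_bi hvw).symm.not_mSeparated S
    · exact not_mSeparated_self _ S
  obtain ⟨k, hk₁, hk₂⟩ := hT.exists_node_of_not_mSeparated hAB
    (Set.pair_subset hui hwi) (Set.pair_subset hvj hwj)
  exact ⟨k, hk₁ (.inl rfl), hk₂ (.inl rfl), hk₁ (.inr rfl)⟩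

end IsMSepTree

end MixedGraph

end MVR

theorem MVR.vStructure_node_and_separator_general
    {V : Type} {ι : Type}
    (G : MVR.MixedGraph V)
    (T : SimpleGraph ι) (C : ι → Set V) (hT : G.IsMSepTree T C)
    (u v w : V) (huv : u ≠ v)
    (huw : G.dir u w ∨ G.bi u w) (hvw : G.dir v w ∨ G.bi v w) :
    (∃ i : ι, u ∈ C i ∧ v ∈ C i ∧ w ∈ C i) ∧
      (∀ S : Set V, S ⊆ Set.univ \ {u, v} → G.MSeparated u v S → w ∉ S) :=
  ⟨hT.exists_node_of_collider huv huw hvw, fun _ _ hsep hw =>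
    MVR.MixedGraph.not_mSeparated_of_collider_mem huv huw hvw hw hsep⟩

/-- Let `T` be an m-separation tree for an MVR chain graph `G` and let
`(u, w, v)` be a v-structure of `G` (`u`, `v` non-adjacent, `u → w` or `u ↔ w`, and
`v → w` or `v ↔ w`).  Then (a) some node of `T` contains `u`, `v` and `w`, and (b)
`w ∉ S` for every `S ⊆ V \ {u, v}` that m-separates `u` and `v` in `G`. -/
theorem MVR.vStructure_node_and_separator
    {V : Type} {ι : Type}
    (G : MVR.MixedGraph V) (hG : G.IsMVRChainGraph)
    (T : SimpleGraph ι) (C : ι → Set V) (hT : G.IsMSepTree T C)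
    (u v w : V) (huv : u ≠ v) (hnadj : ¬ G.Adjacent u v)
    (huw : G.dir u w ∨ G.bi u w) (hvw : G.dir v w ∨ G.bi v w) :
    (∃ i : ι, u ∈ C i ∧ v ∈ C i ∧ w ∈ C i) ∧
      (∀ S : Set V, S ⊆ Set.univ \ {u, v} → G.MSeparated u v S → w ∉ S) :=
  MVR.vStructure_node_and_separator_general G T C hT u v w huv huw hvw
end
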